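/- Let A, B be positive bounded operators on a Hilbert space H with R(B) closed. Then R(A+B) = R(A) + R(B) if and only if the pair (A, N(B)) is compatible, i.e., N(B) + (A·N(B))^⊥ = H. -/

import Mathlib

/-!
Let `q` be the orthogonal projection onto `N = N(B)` and `p = 1 - q`. Since `R(B) = N^⊥` is closed,
`B + q` is invertible. By Douglas' lemma `R(S) ⊆ R(T)` iff `T ∣ S` in `L(H)`, so range additivity
reads `A + B ∣ B` and compatibility reads `qAq ∣ qA`, and these are equivalent in any C⋆-algebra.

If `qAq y = qA`, then `w = (1 - qy)p` satisfies `q(A + B)w = 0`, hence `(A + B)w = κ - q` for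
`κ = w*(A + B)w + q ≥ B + q`, and `k = wκ⁻¹B` solves `(A + B)k = B`.
Conversely, `G = p(A + B)p + q ≥ B + q` is invertible, and `W = 1 - pG⁻¹p(A + B)` gives the Schur
complement `β = (A + B)W = W*(A + B)W ≥ 0` of `p(A + B)p`. If `(A + B)k = qA` then `βk = qA` and
`qAq = β(1 + Xβ)` with `X = k pG⁻¹p k* ≥ 0`; `1 + Xβ` is invertible because `1 + √X β √X ≥ 1` is.
-/

section Ring

variable {R : Type*} [Ring R]

theorem isUnit_one_add_mul_comm {a b : R} :
    IsUnit (1 + a * b) ↔ IsUnit (1 + b * a) := by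
  have h := spectrum.unit_mem_mul_comm (R := ℤ) (a := a) (b := b) (r := -1)
  simpa only [spectrum.mem_iff, Units.val_neg, Units.val_one, map_neg, map_one, ← neg_add',
    IsUnit.neg_iff, not_iff_not] using h

theorem dvd_one_sub_of_isUnit_add {b q : R} (hq : IsIdempotentElem q) (hqb : q * b = 0)
    (hbq : IsUnit (b + q)) : b ∣ 1 - q := by
  obtain ⟨v, hv⟩ := hbq
  have hqv : q * ↑v⁻¹ = q := by
    rw [Units.mul_inv_eq_iff_eq_mul, hv, mul_add, hqb, zero_add, hq.eq]
  refine ⟨↑v⁻¹, ?_⟩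
  rw [← hqv, ← Units.mul_inv v, ← sub_mul, hv, add_sub_cancel_right]

theorem add_dvd_mul_of_add_dvd {a b q : R} (hq : IsIdempotentElem q) (hqb : q * b = 0)
    (hbq : IsUnit (b + q)) (h : a + b ∣ b) : a + b ∣ q * a := by
  have ha : a + b ∣ a := by simpa using dvd_sub (dvd_refl (a + b)) h
  have hpa : a + b ∣ (1 - q) * a := (h.trans (dvd_one_sub_of_isUnit_add hq hqb hbq)).mul_right a
  have : q * a = a - (1 - q) * a := by noncomm_ring
  exact this ▸ dvd_sub ha hpa

variable [StarRing R]

theorem IsSelfAdjoint.mul_eq_zero_comm {a b : R} (ha : IsSelfAdjoint a) (hb : IsSelfAdjoint b) :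
    a * b = 0 ↔ b * a = 0 := by
  rw [← star_eq_zero, star_mul, ha.star_eq, hb.star_eq]

theorem star_mul_mul_eq_mul_of_mul_eq_zero {e c w : R} (he : IsSelfAdjoint e)
    (hw : e * (1 - w) = 1 - w) (hcw : e * c * w = 0) : star w * c * w = c * w := by
  have h : star (1 - w) * (c * w) = 0 := by
    rw [← hw, star_mul, he.star_eq, mul_assoc, ← mul_assoc e, hcw, mul_zero]
  rw [star_sub, star_one, sub_mul, one_mul, sub_eq_zero] at h
  rw [mul_assoc, ← h]

theorem IsStarProjection.mul_star_mul_mul_add_self {q c w : R} (hq : IsStarProjection q)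
    (hwq : w * q = 0) : q * (star w * c * w + q) = q := by
  have hqw : q * star w = 0 := by rw [← hq.isSelfAdjoint.star_eq, ← star_mul, hwq, star_zero]
  rw [mul_add, ← mul_assoc, ← mul_assoc, hqw, zero_mul, zero_mul, zero_add, hq.isIdempotentElem.eq]

end Ring

theorem le_star_mul_add_mul {R : Type*} [NonUnitalSemiring R] [PartialOrder R] [StarRing R]
    [StarOrderedRing R] {a b w : R} (ha : 0 ≤ a) (hb : IsSelfAdjoint b) (hbw : b * w = b) :
    b ≤ star w * (a + b) * w := by
  have hwb : star w * b = b := by rw [← hb.star_eq, ← star_mul, hbw]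
  rw [mul_add, add_mul, hwb, hbw]
  exact le_add_of_nonneg_left (star_left_conjugate_nonneg ha w)

section CStarAlgebra

variable {𝒜 : Type*} [CStarAlgebra 𝒜] [PartialOrder 𝒜] [StarOrderedRing 𝒜]

open CFC in
theorem isUnit_one_add_mul_of_nonneg {x y : 𝒜} (hx : 0 ≤ x) (hy : 0 ≤ y) :
    IsUnit (1 + x * y) := by
  have hs : IsSelfAdjoint (sqrt x) := .of_nonneg (sqrt_nonneg x)
  have hsys : 0 ≤ sqrt x * y * sqrt x := by
    simpa [hs.star_eq] using star_left_conjugate_nonneg hy (sqrt x)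
  rw [← sqrt_mul_sqrt_self x, mul_assoc, isUnit_one_add_mul_comm]
  exact CStarAlgebra.isUnit_of_le 1 (le_add_of_nonneg_right hsys) isStrictlyPositive_one

theorem isStrictlyPositive_star_mul_add_mul_add {a b q w : 𝒜} (ha : 0 ≤ a) (hb : 0 ≤ b)
    (hbq : IsStrictlyPositive (b + q)) (hbw : b * w = b) :
    IsStrictlyPositive (star w * (a + b) * w + q) :=
  hbq.of_le (add_le_add_left (le_star_mul_add_mul ha hb.isSelfAdjoint hbw) q)

theorem add_dvd_of_mul_mul_dvd {a b q : 𝒜} (ha : 0 ≤ a) (hb : 0 ≤ b)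
    (hq : IsStarProjection q) (hbq : b * q = 0) (hbq' : IsStrictlyPositive (b + q))
    (h : q * a * q ∣ q * a) : a + b ∣ b := by
  obtain ⟨y, hy⟩ := h
  have hqq : q * q = q := hq.isIdempotentElem.eq
  have hqb : q * b = 0 := (hb.isSelfAdjoint.mul_eq_zero_comm hq.isSelfAdjoint).mp hbq
  set w := (1 - q * y) * (1 - q) with hw
  have hwq : w * q = 0 := by rw [hw, mul_assoc, hq.one_sub_mul_self, mul_zero]
  have hbw : b * w = b := by
    have : b * (1 - q * y) = b := by rw [mul_sub, mul_one, ← mul_assoc, hbq, zero_mul, sub_zero]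
    rw [hw, ← mul_assoc, this, mul_sub, mul_one, hbq, sub_zero]
  have hqw : q * (1 - w) = 1 - w := by
    have : 1 - w = q * (1 + y * (1 - q)) := by rw [hw]; noncomm_ring
    rw [this, ← mul_assoc, hqq]
  have hqcw : q * (a + b) * w = 0 := by
    have : q * a * (1 - q * y) = 0 := by rw [mul_sub, mul_one, ← mul_assoc, ← hy, sub_self]
    rw [mul_add, hqb, add_zero, hw, ← mul_assoc, this, zero_mul]
  obtain ⟨κ, hκ⟩ := (isStrictlyPositive_star_mul_add_mul_add ha hb hbq' hbw).isUnit
  have hqκ : q * ↑κ⁻¹ = q := by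
    rw [Units.mul_inv_eq_iff_eq_mul, hκ, hq.mul_star_mul_mul_add_self hwq]
  have hκw : (a + b) * w = κ - q := by
    rw [hκ, add_sub_cancel_right, star_mul_mul_eq_mul_of_mul_eq_zero hq.isSelfAdjoint hqw hqcw]
  refine ⟨w * ↑κ⁻¹ * b, ?_⟩
  rw [← mul_assoc, ← mul_assoc, hκw, sub_mul, Units.mul_inv, hqκ, sub_mul, one_mul, hqb, sub_zero]

theorem dvd_of_eq_add_mul_mul_star {β g k x c : 𝒜} (hβ : 0 ≤ β) (hg : 0 ≤ g) (hk : β * k = x)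
    (hc : c = β + x * g * star x) : c ∣ x := by
  have hfac : c = β * (1 + k * g * star k * β) := by
    rw [hc, ← hk, star_mul, hβ.isSelfAdjoint.star_eq]
    noncomm_ring
  obtain ⟨v, hv⟩ := isUnit_one_add_mul_of_nonneg (star_right_conjugate_nonneg hg k) hβ
  calc c ∣ β := ⟨↑v⁻¹, by rw [hfac, ← hv, mul_assoc, Units.mul_inv, mul_one]⟩
    _ ∣ x := ⟨k, hk.symm⟩

theorem exists_nonneg_mul_eq_one_sub {a b q : 𝒜} (ha : 0 ≤ a) (hb : 0 ≤ b)
    (hq : IsStarProjection q) (hbq : b * q = 0) (hbq' : IsStrictlyPositive (b + q)) :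
    ∃ h : 𝒜, 0 ≤ h ∧ (1 - q) * (a + b) * (1 - q) * h = 1 - q := by
  have hbp : b * (1 - q) = b := by rw [mul_sub, mul_one, hbq, sub_zero]
  have hGpos := isStrictlyPositive_star_mul_add_mul_add ha hb hbq' hbp
  obtain ⟨G, hG⟩ := hGpos.isUnit
  have hqG : q * ↑G⁻¹ = q := by
    rw [Units.mul_inv_eq_iff_eq_mul, hG, hq.mul_star_mul_mul_add_self hq.one_sub_mul_self]
  refine ⟨↑G⁻¹, CFC.inv_nonneg_of_nonneg G (hG ▸ hGpos.nonneg), ?_⟩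
  have hpcp : (1 - q) * (a + b) * (1 - q) = G - q := by
    rw [hG, hq.one_sub.isSelfAdjoint.star_eq, add_sub_cancel_right]
  rw [hpcp, sub_mul, Units.mul_inv, hqG]

theorem exists_schur_complement {a b q k : 𝒜} (ha : 0 ≤ a) (hb : 0 ≤ b)
    (hq : IsStarProjection q) (hbq : b * q = 0) (hbq' : IsStrictlyPositive (b + q))
    (hk : (a + b) * k = q * a) :
    ∃ β g : 𝒜, 0 ≤ β ∧ 0 ≤ g ∧ β * k = q * a ∧ q * a * q = β + q * a * g * star (q * a) := by
  have hqb : q * b = 0 := (hb.isSelfAdjoint.mul_eq_zero_comm hq.isSelfAdjoint).mp hbq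
  obtain ⟨h, hh, hph⟩ := exists_nonneg_mul_eq_one_sub ha hb hq hbq hbq'
  set p := 1 - q with hp
  have hp' : IsStarProjection p := hq.one_sub
  have hpp : p * p = p := hp'.isIdempotentElem.eq
  set W := 1 - p * h * p * (a + b) with hW
  have hpW : p * (1 - W) = 1 - W := by rw [hW, sub_sub_cancel]; simp only [← mul_assoc, hpp]
  have hpcW : p * (a + b) * W = 0 := by
    rw [hW, mul_sub, mul_one, ← mul_assoc, ← mul_assoc, ← mul_assoc, hph, hpp, sub_self]
  set β := (a + b) * W with hβ
  have hβ0 : 0 ≤ β := by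
    rw [hβ, ← star_mul_mul_eq_mul_of_mul_eq_zero hp'.isSelfAdjoint hpW hpcW]
    exact star_left_conjugate_nonneg (add_nonneg ha hb) W
  have hqβ : q * β = β := by
    have : p * β = 0 := by rw [hβ, ← mul_assoc, hpcW]
    rwa [hp, sub_mul, one_mul, sub_eq_zero, eq_comm] at this
  have hβq : β * q = β := by
    rwa [← hβ0.isSelfAdjoint.star_eq, ← hq.isSelfAdjoint.star_eq, ← star_mul, star_inj]
  have hWk : W * k = k := by
    have h1W : (1 - W) * k = 0 := by
      rw [hW, sub_sub_cancel, mul_assoc, hk, ← mul_assoc, mul_assoc _ p q, hq.one_sub_mul_self,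
        mul_zero, zero_mul]
    rwa [sub_mul, one_mul, sub_eq_zero, eq_comm] at h1W
  refine ⟨β, p * h * p, hβ0, ?_, by rw [hβ, mul_assoc, hWk, hk], ?_⟩
  · simpa [hp'.isSelfAdjoint.star_eq] using star_left_conjugate_nonneg hh p
  · calc q * a * q = q * (a + b) * q := by rw [mul_add, hqb, add_zero]
      _ = q * β * q + q * (a + b) * (p * h * p) * ((a + b) * q) := by
        rw [hβ, hW]; noncomm_ring
      _ = β + q * a * (p * h * p) * star (q * a) := by
        rw [hqβ, hβq, mul_add q a b, hqb, add_zero, add_mul a b q, hbq, add_zero, star_mul,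
          ha.isSelfAdjoint.star_eq, hq.isSelfAdjoint.star_eq]

theorem mul_mul_dvd_of_add_dvd {a b q : 𝒜} (ha : 0 ≤ a) (hb : 0 ≤ b)
    (hq : IsStarProjection q) (hbq : b * q = 0) (hbq' : IsStrictlyPositive (b + q))
    (h : a + b ∣ b) : q * a * q ∣ q * a := by
  have hqb : q * b = 0 := (hb.isSelfAdjoint.mul_eq_zero_comm hq.isSelfAdjoint).mp hbq
  obtain ⟨k, hk⟩ := add_dvd_mul_of_add_dvd hq.isIdempotentElem hqb hbq'.isUnit h
  obtain ⟨β, g, hβ, hg, hβk, hqaq⟩ := exists_schur_complement ha hb hq hbq hbq' hk.symm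
  exact dvd_of_eq_add_mul_mul_star hβ hg hβk hqaq

theorem add_dvd_iff_mul_mul_dvd {a b q : 𝒜} (ha : 0 ≤ a) (hb : 0 ≤ b)
    (hq : IsStarProjection q) (hbq : b * q = 0) (hbq' : IsStrictlyPositive (b + q)) :
    a + b ∣ b ↔ q * a * q ∣ q * a :=
  ⟨mul_mul_dvd_of_add_dvd ha hb hq hbq hbq', add_dvd_of_mul_mul_dvd ha hb hq hbq hbq'⟩

end CStarAlgebra

theorem LinearMap.range_add_eq_sup_iff {R M M₂ : Type*} [Ring R] [AddCommGroup M]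
    [AddCommGroup M₂] [Module R M] [Module R M₂] (f g : M →ₗ[R] M₂) :
    range (f + g) = range f ⊔ range g ↔ range g ≤ range (f + g) := by
  refine ⟨fun h => h ▸ le_sup_right, fun h => le_antisymm (range_add_le f g) (sup_le ?_ h)⟩
  rintro _ ⟨x, rfl⟩
  obtain ⟨y, hy⟩ := h ⟨x, rfl⟩
  exact ⟨x - y, by simp only [LinearMap.add_apply, map_sub] at hy ⊢; rw [← hy]; abel⟩

namespace ContinuousLinearMap

variable {𝕜 E F G : Type*} [RCLike 𝕜] [NormedAddCommGroup E] [InnerProductSpace 𝕜 E]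
  [CompleteSpace E] [NormedAddCommGroup F] [NormedSpace 𝕜 F] [NormedAddCommGroup G]
  [NormedSpace 𝕜 G] [CompleteSpace G]

theorem exists_comp_eq_of_range_le {S : G →L[𝕜] F} {T : E →L[𝕜] F}
    (h : LinearMap.range (S : G →ₗ[𝕜] F) ≤ LinearMap.range (T : E →ₗ[𝕜] F)) :
    ∃ C : G →L[𝕜] E, T ∘L C = S := by
  set K := LinearMap.ker (T : E →ₗ[𝕜] F)
  -- `Γ` is the graph of the sought `C` (with values in `Kᗮ`); open mapping inverts `Γ → G`.
  let Γ : Submodule 𝕜 (G × Kᗮ) :=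
    LinearMap.ker ((S ∘L fst 𝕜 G Kᗮ - T ∘L Kᗮ.subtypeL ∘L snd 𝕜 G Kᗮ : G × Kᗮ →L[𝕜] F) :
      G × Kᗮ →ₗ[𝕜] F)
  have hΓ : ∀ γ : Γ, S γ.1.1 = T γ.1.2 := fun γ => sub_eq_zero.mp γ.2
  have : CompleteSpace Γ := (isClosed_ker _).completeSpace_coe
  let π : Γ →L[𝕜] G := fst 𝕜 G Kᗮ ∘L Γ.subtypeL
  have hπ : Function.Bijective π := by
    constructor
    · rw [injective_iff_map_eq_zero]
      intro γ hγ
      have h1 : γ.1.1 = 0 := hγ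
      have h2 : (γ.1.2 : E) ∈ K := by
        rw [LinearMap.mem_ker]; simpa [h1] using (hΓ γ).symm
      have h3 := Submodule.mem_inf.mpr ⟨h2, γ.1.2.2⟩
      rw [Submodule.inf_orthogonal_eq_bot, Submodule.mem_bot] at h3
      exact Subtype.ext (Prod.ext h1 (Subtype.ext h3))
    · intro x
      obtain ⟨y, hy⟩ := h ⟨x, rfl⟩
      refine ⟨⟨(x, ⟨y - K.starProjection y, K.sub_starProjection_mem_orthogonal y⟩), ?_⟩, rfl⟩
      have : T (K.starProjection y) = 0 := K.starProjection_apply_mem y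
      simp only [Γ, LinearMap.mem_ker]
      simp only [ContinuousLinearMap.coe_coe] at hy
      simp [this, hy]
  let e := ContinuousLinearEquiv.ofBijective π (LinearMap.ker_eq_bot.mpr hπ.1)
    (LinearMap.range_eq_top.mpr hπ.2)
  refine ⟨Kᗮ.subtypeL ∘L snd 𝕜 G Kᗮ ∘L Γ.subtypeL ∘L (e.symm : G →L[𝕜] Γ), ?_⟩
  ext x
  have hx : (e.symm x).1.1 = x := e.apply_symm_apply x
  simpa [hx] using (hΓ (e.symm x)).symm

theorem dvd_iff_range_le {S T : E →L[𝕜] E} :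
    T ∣ S ↔ LinearMap.range (S : E →ₗ[𝕜] E) ≤ LinearMap.range (T : E →ₗ[𝕜] E) := by
  constructor
  · rintro ⟨C, rfl⟩
    exact LinearMap.range_comp_le_range (C : E →ₗ[𝕜] E) (T : E →ₗ[𝕜] E)
  · intro h
    obtain ⟨C, hC⟩ := exists_comp_eq_of_range_le h
    exact ⟨C, hC.symm⟩

end ContinuousLinearMap

namespace Submodule

variable {𝕜 E : Type*} [RCLike 𝕜] [NormedAddCommGroup E] [InnerProductSpace 𝕜 E] [CompleteSpace E]

theorem orthogonal_map_eq_ker_starProjection_mul (K : Submodule 𝕜 E) [K.HasOrthogonalProjection]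
    {A : E →L[𝕜] E} (hA : IsSelfAdjoint A) :
    (K.map (A : E →ₗ[𝕜] E))ᗮ = LinearMap.ker ((K.starProjection * A : E →L[𝕜] E) : E →ₗ[𝕜] E) := by
  ext w
  rw [LinearMap.mem_ker, ContinuousLinearMap.coe_coe]
  change _ ↔ K.starProjection (A w) = 0
  simp only [starProjection_apply_eq_zero_iff, mem_orthogonal, mem_map, forall_exists_index,
    and_imp, forall_apply_eq_imp_iff₂, ContinuousLinearMap.coe_coe]
  exact forall₂_congr fun x _ => by rw [← ContinuousLinearMap.coe_coe A, hA.isSymmetric x w]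

theorem sup_orthogonal_map_eq_top_iff (K : Submodule 𝕜 E) [K.HasOrthogonalProjection]
    {A : E →L[𝕜] E} (hA : IsSelfAdjoint A) :
    K ⊔ (K.map (A : E →ₗ[𝕜] E))ᗮ = ⊤ ↔
      K.starProjection * A * K.starProjection ∣ K.starProjection * A := by
  have hmap : K.map ((K.starProjection * A : E →L[𝕜] E) : E →ₗ[𝕜] E) =
      LinearMap.range ((K.starProjection * A * K.starProjection : E →L[𝕜] E) : E →ₗ[𝕜] E) := by
    have h := LinearMap.range_comp (K.starProjection : E →ₗ[𝕜] E)
      ((K.starProjection * A : E →L[𝕜] E) : E →ₗ[𝕜] E)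
    rw [K.range_starProjection] at h
    exact h.symm
  rw [orthogonal_map_eq_ker_starProjection_mul K hA, ← codisjoint_iff, ← map_eq_range_iff, hmap,
    ContinuousLinearMap.dvd_iff_range_le]
  exact ⟨fun h => h.ge, fun h => le_antisymm (LinearMap.range_comp_le_range _ _) h⟩

end Submodule

namespace ContinuousLinearMap

variable {𝕜 E : Type*} [RCLike 𝕜] [NormedAddCommGroup E] [InnerProductSpace 𝕜 E] [CompleteSpace E]

theorem isUnit_add_starProjection_ker {T : E →L[𝕜] E} (hT : IsSelfAdjoint T)
    (hR : IsClosed (LinearMap.range (T : E →ₗ[𝕜] E) : Set E)) :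
    IsUnit (T + (LinearMap.ker (T : E →ₗ[𝕜] E)).starProjection) := by
  set K := LinearMap.ker (T : E →ₗ[𝕜] E)
  have hrange : LinearMap.range (T : E →ₗ[𝕜] E) = Kᗮ := by
    rw [T.orthogonal_ker, hT.adjoint_eq, hR.submodule_topologicalClosure_eq]
  have hTq : ∀ y, T (K.starProjection y) = 0 := fun y => K.starProjection_apply_mem y
  rw [isUnit_iff_bijective]
  constructor
  · rw [injective_iff_map_eq_zero]
    intro x hx
    have hx' : T x = -K.starProjection x := eq_neg_of_add_eq_zero_left hx
    have hTx : T x ∈ K ⊓ Kᗮ :=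
      ⟨hx' ▸ neg_mem (K.starProjection_apply_mem x), hrange ▸ ⟨x, rfl⟩⟩
    rw [Submodule.inf_orthogonal_eq_bot, Submodule.mem_bot] at hTx
    rw [← Submodule.starProjection_eq_self_iff.mpr (show x ∈ K from hTx), ← neg_eq_zero, ← hx',
      hTx]
  · intro v
    obtain ⟨w, hw⟩ : v - K.starProjection v ∈ LinearMap.range (T : E →ₗ[𝕜] E) :=
      hrange ▸ K.sub_starProjection_mem_orthogonal v
    have hqq : ∀ y, K.starProjection (K.starProjection y) = K.starProjection y :=
      fun y => Submodule.starProjection_eq_self_iff.mpr (K.starProjection_apply_mem y)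
    refine ⟨w - K.starProjection w + K.starProjection v, ?_⟩
    simp only [ContinuousLinearMap.coe_coe] at hw
    change T _ + K.starProjection _ = v
    simp only [map_add, map_sub, hTq, hqq, hw]
    abel

end ContinuousLinearMap

open ContinuousLinearMap

variable {H : Type*} [NormedAddCommGroup H] [InnerProductSpace ℂ H] [CompleteSpace H]

theorem range_additivity_iff_compatible (A B : H →L[ℂ] H)
    (hA : A.IsPositive) (hB : B.IsPositive)
    (hRB : IsClosed ((LinearMap.range (B : H →ₗ[ℂ] H) : Submodule ℂ H) : Set H)) :
    LinearMap.range ((A + B : H →L[ℂ] H) : H →ₗ[ℂ] H) = LinearMap.range (A : H →ₗ[ℂ] H) ⊔ LinearMap.range (B : H →ₗ[ℂ] H) ↔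
      LinearMap.ker (B : H →ₗ[ℂ] H) ⊔ (Submodule.map (A : H →ₗ[ℂ] H) (LinearMap.ker (B : H →ₗ[ℂ] H)))ᗮ = ⊤ := by
  set N := LinearMap.ker (B : H →ₗ[ℂ] H)
  have hBq : B * N.starProjection = 0 := by
    ext x
    exact N.starProjection_apply_mem x
  have hA0 : 0 ≤ A := (nonneg_iff_isPositive A).mpr hA
  have hB0 : 0 ≤ B := (nonneg_iff_isPositive B).mpr hB
  have hBq' : IsStrictlyPositive (B + N.starProjection) :=
    (isUnit_add_starProjection_ker hB.isSelfAdjoint hRB).isStrictlyPositive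
      (add_nonneg hB0 isStarProjection_starProjection.nonneg)
  rw [toLinearMap_add, LinearMap.range_add_eq_sup_iff, ← toLinearMap_add, ← dvd_iff_range_le,
    Submodule.sup_orthogonal_map_eq_top_iff N hA.isSelfAdjoint]
  exact add_dvd_iff_mul_mul_dvd hA0 hB0 isStarProjection_starProjection hBq hBq'
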